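/- Let K_w ≥ 1 and K_l ≥ 1 be integers, let b : {0, …, K_w - 1} → ℝ and e : {0, …, K_l - 1} → ℝ satisfy b_j ≥ 1 and e_j ≥ 1 for all j, and let N ≥ 1 be an integer. For p ∈ [0, 1] define τ_w(p) = (Σ_{j=0}^{K_w-1} p^j)/(Σ_{j=0}^{K_w-1} b_j·p^j) and τ_l(p) = (Σ_{j=0}^{K_l-1} p^j)/(Σ_{j=0}^{K_l-1} e_j·p^j). Then there exist p_w, p_l ∈ [0, 1] satisfying simultaneously p_w = 1 - (1 - τ_w(p_w))^{N-1}·(1 - τ_l(p_l)) and p_l = 1 - (1 - τ_w(p_w))^N. -/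
import Mathlib

lemma aux_one_le_sum_pow {K : ℕ} (hK : 1 ≤ K) {p : ℝ} (hp0 : 0 ≤ p) :
    1 ≤ ∑ j : Fin K, p ^ (j : ℕ) := by
  calc (1 : ℝ) = p ^ ((⟨0, hK⟩ : Fin K) : ℕ) := by simp
    _ ≤ ∑ j : Fin K, p ^ (j : ℕ) :=
      Finset.single_le_sum (fun i _ => pow_nonneg hp0 _) (Finset.mem_univ _)

lemma aux_sum_le_weighted {K : ℕ} (b : Fin K → ℝ) (hb : ∀ j, 1 ≤ b j) {p : ℝ} (hp0 : 0 ≤ p) :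
    ∑ j : Fin K, p ^ (j : ℕ) ≤ ∑ j : Fin K, b j * p ^ (j : ℕ) :=
  Finset.sum_le_sum fun i _ => le_mul_of_one_le_left (pow_nonneg hp0 _) (hb i)

lemma aux_denom_pos {K : ℕ} (hK : 1 ≤ K) (b : Fin K → ℝ) (hb : ∀ j, 1 ≤ b j) {p : ℝ}
    (hp0 : 0 ≤ p) : 0 < ∑ j : Fin K, b j * p ^ (j : ℕ) :=
  lt_of_lt_of_le one_pos ((aux_one_le_sum_pow hK hp0).trans (aux_sum_le_weighted b hb hp0))

lemma aux_tau_mem {K : ℕ} (hK : 1 ≤ K) (b : Fin K → ℝ) (hb : ∀ j, 1 ≤ b j) {p : ℝ}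
    (hp0 : 0 ≤ p) :
    (∑ j : Fin K, p ^ (j : ℕ)) / (∑ j : Fin K, b j * p ^ (j : ℕ)) ∈ Set.Icc (0 : ℝ) 1 := by
  constructor
  · exact div_nonneg (le_trans zero_le_one (aux_one_le_sum_pow hK hp0))
      (le_of_lt (aux_denom_pos hK b hb hp0))
  · rw [div_le_one (aux_denom_pos hK b hb hp0)]
    exact aux_sum_le_weighted b hb hp0

lemma aux_tau_cont {K : ℕ} (hK : 1 ≤ K) (b : Fin K → ℝ) (hb : ∀ j, 1 ≤ b j) :
    ContinuousOn (fun p : ℝ =>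
      (∑ j : Fin K, p ^ (j : ℕ)) / (∑ j : Fin K, b j * p ^ (j : ℕ))) (Set.Icc 0 1) := by
  apply ContinuousOn.div
  · exact Continuous.continuousOn (continuous_finset_sum _ fun i _ => continuous_pow _)
  · exact Continuous.continuousOn
      (continuous_finset_sum _ fun i _ => continuous_const.mul (continuous_pow _))
  · exact fun p hp => ne_of_gt (aux_denom_pos hK b hb hp.1)

theorem stmt_8 (Kw Kl : ℕ) (hKw : 1 ≤ Kw) (hKl : 1 ≤ Kl)
    (b : Fin Kw → ℝ) (e : Fin Kl → ℝ)
    (hb : ∀ j, 1 ≤ b j) (he : ∀ j, 1 ≤ e j)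
    (N : ℕ) (hN : 1 ≤ N)
    (τw : ℝ → ℝ)
    (hτw : ∀ p, τw p = (∑ j : Fin Kw, p ^ (j : ℕ)) / (∑ j : Fin Kw, b j * p ^ (j : ℕ)))
    (τl : ℝ → ℝ)
    (hτl : ∀ p, τl p = (∑ j : Fin Kl, p ^ (j : ℕ)) / (∑ j : Fin Kl, e j * p ^ (j : ℕ))) :
    ∃ pw pl : ℝ, pw ∈ Set.Icc (0 : ℝ) 1 ∧ pl ∈ Set.Icc (0 : ℝ) 1 ∧
      pw = 1 - (1 - τw pw) ^ (N - 1) * (1 - τl pl) ∧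
      pl = 1 - (1 - τw pw) ^ N := by
  have hτw' : τw = fun p : ℝ =>
      (∑ j : Fin Kw, p ^ (j : ℕ)) / (∑ j : Fin Kw, b j * p ^ (j : ℕ)) := funext hτw
  have hτl' : τl = fun p : ℝ =>
      (∑ j : Fin Kl, p ^ (j : ℕ)) / (∑ j : Fin Kl, e j * p ^ (j : ℕ)) := funext hτl
  -- range facts
  have hτwm : ∀ p : ℝ, p ∈ Set.Icc (0:ℝ) 1 → τw p ∈ Set.Icc (0:ℝ) 1 := by
    intro p hp; rw [hτw]; exact aux_tau_mem hKw b hb hp.1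
  have hτlm : ∀ p : ℝ, p ∈ Set.Icc (0:ℝ) 1 → τl p ∈ Set.Icc (0:ℝ) 1 := by
    intro p hp; rw [hτl]; exact aux_tau_mem hKl e he hp.1
  -- one-minus facts
  have hw1 : ∀ p : ℝ, p ∈ Set.Icc (0:ℝ) 1 → (1 - τw p) ∈ Set.Icc (0:ℝ) 1 := by
    intro p hp; obtain ⟨h1, h2⟩ := hτwm p hp
    constructor <;> [linarith; linarith]
  have hl1 : ∀ p : ℝ, p ∈ Set.Icc (0:ℝ) 1 → (1 - τl p) ∈ Set.Icc (0:ℝ) 1 := by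
    intro p hp; obtain ⟨h1, h2⟩ := hτlm p hp
    constructor <;> [linarith; linarith]
  -- the inner map p ↦ 1 - (1 - τw p)^N
  set A : ℝ → ℝ := fun p => 1 - (1 - τw p) ^ N with hA
  have hAm : ∀ p : ℝ, p ∈ Set.Icc (0:ℝ) 1 → A p ∈ Set.Icc (0:ℝ) 1 := by
    intro p hp
    obtain ⟨h1, h2⟩ := hw1 p hp
    have hp1 : (1 - τw p) ^ N ≤ 1 := pow_le_one₀ h1 h2
    have hp0 : 0 ≤ (1 - τw p) ^ N := pow_nonneg h1 _
    exact ⟨by simp [hA]; linarith, by simp [hA]; linarith⟩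
  -- g
  set g : ℝ → ℝ := fun p => 1 - (1 - τw p) ^ (N - 1) * (1 - τl (A p)) with hg
  have hgm : ∀ p : ℝ, p ∈ Set.Icc (0:ℝ) 1 → g p ∈ Set.Icc (0:ℝ) 1 := by
    intro p hp
    obtain ⟨h1, h2⟩ := hw1 p hp
    obtain ⟨h3, h4⟩ := hl1 (A p) (hAm p hp)
    have hp1 : (1 - τw p) ^ (N - 1) ≤ 1 := pow_le_one₀ h1 h2
    have hp0 : 0 ≤ (1 - τw p) ^ (N - 1) := pow_nonneg h1 _
    have hm0 : 0 ≤ (1 - τw p) ^ (N - 1) * (1 - τl (A p)) := mul_nonneg hp0 h3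
    have hm1 : (1 - τw p) ^ (N - 1) * (1 - τl (A p)) ≤ 1 :=
      mul_le_one₀ hp1 h3 h4
    exact ⟨by simp [hg]; linarith, by simp [hg]; linarith⟩
  -- continuity
  have hcτw : ContinuousOn τw (Set.Icc 0 1) := hτw' ▸ aux_tau_cont hKw b hb
  have hcτl : ContinuousOn τl (Set.Icc 0 1) := hτl' ▸ aux_tau_cont hKl e he
  have hcA : ContinuousOn A (Set.Icc 0 1) := by
    apply ContinuousOn.sub continuousOn_const
    exact ((continuousOn_const.sub hcτw).pow N)
  have hcg : ContinuousOn g (Set.Icc 0 1) := by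
    apply ContinuousOn.sub continuousOn_const
    apply ContinuousOn.mul ((continuousOn_const.sub hcτw).pow (N - 1))
    apply ContinuousOn.sub continuousOn_const
    exact hcτl.comp hcA hAm
  -- IVT on h p = g p - p
  have hch : ContinuousOn (fun p => g p - p) (Set.Icc 0 1) :=
    hcg.sub continuousOn_id
  have h0 : (0:ℝ) ≤ g 0 - 0 := by
    have := (hgm 0 (by constructor <;> norm_num)).1; linarith
  have h1 : g 1 - 1 ≤ 0 := by
    have := (hgm 1 (by constructor <;> norm_num)).2; linarith
  have key : (0:ℝ) ∈ (fun p => g p - p) '' Set.Icc 0 1 := by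
    apply intermediate_value_Icc' (by norm_num : (0:ℝ) ≤ 1) hch
    exact ⟨h1, h0⟩
  obtain ⟨p, hp, hpz⟩ := key
  refine ⟨p, A p, hp, hAm p hp, ?_, rfl⟩
  have hpz' : g p - p = 0 := hpz
  have : g p = p := by linarith
  simpa [hg] using this.symm
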